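/- Ideal membership via normal forms: let ≻ be an admissible ordering and let G be a standard basis of the difference ideal I. Then for every f ∈ R, f ∈ I if and only if 0 is a normal form of f modulo G; equivalently, every normal form of f modulo G equals 0 exactly when f ∈ I. -/

import Mathlib

/-- The free commutative monoid of shifts `Θ`. -/
abbrev Shift (n : ℕ) := Fin n → ℕ

/-- The set of difference variables `V = Θ × Fin m`. -/
abbrev DVar (n m : ℕ) := (Fin n → ℕ) × Fin m

/-- The additive commutative monoid of difference monomials `M = V →₀ ℕ`. -/
abbrev DMon (n m : ℕ) := DVar n m →₀ ℕ

/-- Action of a shift `θ` on a difference variable: `θ • (θ', α) = (θ + θ', α)`. -/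
def shiftV {n m : ℕ} (θ : Shift n) (v : DVar n m) : DVar n m := (θ + v.1, v.2)

/-- Action of a shift `θ` on a difference monomial. -/
noncomputable def shiftM {n m : ℕ} (θ : Shift n) (w : DMon n m) : DMon n m :=
  Finsupp.mapDomain (shiftV θ) w

/-- Divisibility of difference monomials: `v ∣ w` iff `w = t + θ • v`. -/
def MDvd {n m : ℕ} (v w : DMon n m) : Prop :=
  ∃ (t : DMon n m) (θ : Shift n), w = t + shiftM θ v

/-- The action of the shift `θ` on the difference polynomial ring
`R = MvPolynomial (DVar n m) K`: the ring endomorphism `σ^θ` applying the given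
endomorphism `σK θ` of `K` to coefficients and `θ • ·` to variables. -/
noncomputable def sigmaR {n m : ℕ} {K : Type} [Field K] (σK : Shift n → (K →+* K))
    (θ : Shift n) :
    MvPolynomial (DVar n m) K →+* MvPolynomial (DVar n m) K :=
  MvPolynomial.eval₂Hom (MvPolynomial.C.comp (σK θ)) fun v => MvPolynomial.X (shiftV θ v)

/-- An admissible ordering on difference monomials: a (strict) linear order `lt` such that
`m ≻ 0` for `m ≠ 0`, compatible with addition of monomials and the action of shifts,
and extending a ranking on the variables. -/
structure Admissible (n m : ℕ) where
  lt : DMon n m → DMon n m → Prop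
  irrefl : ∀ a, ¬ lt a a
  trans : ∀ a b c, lt a b → lt b c → lt a c
  trichotomy : ∀ a b, lt a b ∨ a = b ∨ lt b a
  pos : ∀ a : DMon n m, a ≠ 0 → lt 0 a
  compat : ∀ (v w t : DMon n m) (θ : Shift n), lt v w ↔ lt (t + shiftM θ v) (t + shiftM θ w)
  ranking : ∀ (θ : Shift n) (i : Fin n) (α : Fin m),
    lt (Finsupp.single (θ, α) 1) (Finsupp.single (θ + Pi.single i 1, α) 1)

/-- `w` is the leading monomial of `f` w.r.t. the ordering `ord`:
it occurs in `f` and is `ord`-greater than any other monomial of `f`. -/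
def IsLm {n m : ℕ} {K : Type} [Field K] (ord : Admissible n m)
    (f : MvPolynomial (DVar n m) K) (w : DMon n m) : Prop :=
  w ∈ f.support ∧ ∀ w' ∈ f.support, w' ≠ w → ord.lt w' w

/-- `f` is monic: its leading coefficient equals `1`. -/
def IsMonicP {n m : ℕ} {K : Type} [Field K] (ord : Admissible n m)
    (f : MvPolynomial (DVar n m) K) : Prop :=
  ∃ w, IsLm ord f w ∧ f.coeff w = 1

/-- Elementary reduction step modulo the set `F`: for some `q ∈ F` with leading monomial
`lq`, and a monomial `w = t + θ • lq` occurring in `p` with coefficient `c`, subtract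
`c · X^t · σ^θ(q)` from `p`, thereby removing the monomial `w`. -/
def RedStep {n m : ℕ} {K : Type} [Field K] (σK : Shift n → (K →+* K)) (ord : Admissible n m)
    (F : Set (MvPolynomial (DVar n m) K)) (p r : MvPolynomial (DVar n m) K) : Prop :=
  ∃ q ∈ F, ∃ lq, IsLm ord q lq ∧ ∃ (t : DMon n m) (θ : Shift n),
    (t + shiftM θ lq) ∈ p.support ∧
    r = p - MvPolynomial.monomial t (p.coeff (t + shiftM θ lq)) * sigmaR σK θ q

/-- `r` is in normal form modulo `F`: no monomial of `r` is divisible by the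
leading monomial of any element of `F`. -/
def InNormalForm {n m : ℕ} {K : Type} [Field K] (ord : Admissible n m)
    (F : Set (MvPolynomial (DVar n m) K)) (r : MvPolynomial (DVar n m) K) : Prop :=
  ∀ w ∈ r.support, ¬ ∃ q ∈ F, ∃ lq, IsLm ord q lq ∧ MDvd lq w

/-- `r` is a normal form of `p` modulo `G`: `r` is reached from `p` by finitely many
elementary reduction steps modulo elements of `G` and `r` is in normal form modulo `G`. -/
def IsNormalFormOf {n m : ℕ} {K : Type} [Field K] (σK : Shift n → (K →+* K))
    (ord : Admissible n m) (G : Set (MvPolynomial (DVar n m) K))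
    (p r : MvPolynomial (DVar n m) K) : Prop :=
  Relation.ReflTransGen (RedStep σK ord G) p r ∧ InNormalForm ord G r

/-- The smallest difference ideal `[F]` containing `F`: the ideal generated by
all shifts `σ^θ f` of elements `f ∈ F`. -/
noncomputable def diffIdealS {n m : ℕ} {K : Type} [Field K] (σK : Shift n → (K →+* K))
    (F : Set (MvPolynomial (DVar n m) K)) : Ideal (MvPolynomial (DVar n m) K) :=
  Ideal.span { g | ∃ (θ : Shift n) (f : MvPolynomial (DVar n m) K), f ∈ F ∧ g = sigmaR σK θ f }

/-- An ideal `I ⊆ R` is a difference ideal if it is stable under all shifts `σ^θ`. -/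
def IsDiffIdeal {n m : ℕ} {K : Type} [Field K] (σK : Shift n → (K →+* K))
    (I : Ideal (MvPolynomial (DVar n m) K)) : Prop :=
  ∀ (θ : Shift n), ∀ f ∈ I, sigmaR σK θ f ∈ I

/-- `s` is an S-polynomial associated to the monic nonzero polynomials `p` and `q`:
`s = X^{t₁} · σ^{θ₁}(p) − X^{t₂} · σ^{θ₂}(q)` where `t₁ + θ₁ • lm(p) = t₂ + θ₂ • lm(q)`
and this common monomial is minimal with respect to divisibility among all common
multiples of `lm(p)` and `lm(q)` of this form. -/
def IsSPoly {n m : ℕ} {K : Type} [Field K] (σK : Shift n → (K →+* K)) (ord : Admissible n m)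
    (p q s : MvPolynomial (DVar n m) K) : Prop :=
  ∃ lp lq, IsLm ord p lp ∧ IsLm ord q lq ∧
    ∃ (t₁ : DMon n m) (θ₁ : Shift n) (t₂ : DMon n m) (θ₂ : Shift n),
      t₁ + shiftM θ₁ lp = t₂ + shiftM θ₂ lq ∧
      (∀ (t₁' : DMon n m) (θ₁' : Shift n) (t₂' : DMon n m) (θ₂' : Shift n),
        t₁' + shiftM θ₁' lp = t₂' + shiftM θ₂' lq →
        MDvd (t₁' + shiftM θ₁' lp) (t₁ + shiftM θ₁ lp) →
        t₁' + shiftM θ₁' lp = t₁ + shiftM θ₁ lp) ∧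
      s = MvPolynomial.monomial t₁ (1 : K) * sigmaR σK θ₁ p
          - MvPolynomial.monomial t₂ (1 : K) * sigmaR σK θ₂ q

/-- `G` is a (difference) standard basis of the ideal `I`: `[G] = I` and the leading
monomial of every nonzero element of `I` is divisible by the leading monomial of
some element of `G`. -/
def IsStandardBasis {n m : ℕ} {K : Type} [Field K] (σK : Shift n → (K →+* K))
    (ord : Admissible n m) (G : Set (MvPolynomial (DVar n m) K))
    (I : Ideal (MvPolynomial (DVar n m) K)) : Prop :=
  diffIdealS σK G = I ∧
  ∀ f ∈ I, f ≠ 0 → ∃ g ∈ G, ∃ lg lf, IsLm ord g lg ∧ IsLm ord f lf ∧ MDvd lg lf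

/-!
Reduction modulo `G` only subtracts elements of `[G] = I`, so `f` and any normal form `r` of `f`
are congruent modulo `I`. If `f ∈ I` then `r ∈ I`, and a nonzero `r` would have its leading
monomial divisible by some `lm(g)`, contradicting that `r` is in normal form.

Normal forms exist because an admissible ordering is a well-order: by the ranking axiom the powers
of variables `(θ, α)^k` are monotone in `(θ, k)`, so by Dickson's lemma they form a partially
well-ordered set, and hence so does the monoid they generate. Reducing the largest reducible
monomial of `p` strictly lowers the largest reducible monomial, so reduction terminates.
-/

section

variable {n m : ℕ}

lemma shiftV_injective (θ : Shift n) : Function.Injective (shiftV θ : DVar n m → DVar n m) := by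
  rintro ⟨a, α⟩ ⟨b, β⟩ h
  simp only [shiftV, Prod.mk.injEq, add_right_inj] at h
  rw [h.1, h.2]

lemma shiftM_zero (w : DMon n m) : shiftM 0 w = w := by
  have : (shiftV 0 : DVar n m → DVar n m) = id := funext fun v ↦ by simp [shiftV]
  simp [shiftM, this]

namespace Admissible

variable (ord : Admissible n m)

lemma lt_add_left_iff {a b : DMon n m} (t : DMon n m) : ord.lt (t + a) (t + b) ↔ ord.lt a b := by
  simpa only [shiftM_zero] using (ord.compat a b t 0).symm

instance : IsStrictTotalOrder (DMon n m) ord.lt where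
  irrefl := ord.irrefl
  trans := ord.trans
  trichotomous a b hab hba := (ord.trichotomy a b).resolve_left hab |>.resolve_right hba

/-- `DMon n m` with the linear order `ord` in place of the pointwise order of `Finsupp`. -/
def Mon (_ord : Admissible n m) : Type := DMon n m

def toMon : DMon n m → ord.Mon := id

noncomputable instance : AddCommMonoid ord.Mon := inferInstanceAs (AddCommMonoid (DMon n m))

instance : IsCancelAdd ord.Mon := inferInstanceAs (IsCancelAdd (DMon n m))

noncomputable instance : LinearOrder ord.Mon := by
  classical exact linearOrderOfSTO (α := DMon n m) ord.lt

variable {ord}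

instance : IsOrderedCancelAddMonoid ord.Mon where
  add_le_add_left a b h c := by
    rcases h.eq_or_lt with rfl | h
    · exact le_rfl
    · rw [add_comm a, add_comm b]
      exact le_of_lt ((ord.lt_add_left_iff c).2 h)
  le_of_add_le_add_left a b c h := by
    rcases h.eq_or_lt with h | h
    · exact (add_left_cancel h).le
    · exact le_of_lt ((ord.lt_add_left_iff a).1 h)

lemma zero_le_toMon (a : DMon n m) : 0 ≤ ord.toMon a := by
  rcases eq_or_ne a 0 with rfl | ha
  · exact le_rfl
  · exact le_of_lt (ord.pos a ha)

lemma toMon_single_le_of_le (α : Fin m) {θ θ' : Shift n} (h : θ ≤ θ') :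
    ord.toMon (Finsupp.single (θ, α) 1) ≤ ord.toMon (Finsupp.single (θ', α) 1) := by
  classical
  refine (monotone_iff_forall_covBy fun θ : Shift n ↦ ord.toMon (Finsupp.single (θ, α) 1)).2
    ?_ h
  intro a b hab
  obtain ⟨i, x, hx, rfl⟩ := Pi.covBy_iff_exists_right_eq.1 hab
  have hupdate : Function.update a i x = a + Pi.single i 1 := by
    ext j
    rcases eq_or_ne j i with rfl | hj <;> simp [← Nat.covBy_iff_add_one_eq.1 hx, *]
  rw [hupdate]
  exact le_of_lt (ord.ranking a i α)

lemma monotone_toMon_single (α : Fin m) :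
    Monotone fun x : Shift n × ℕ ↦ ord.toMon (Finsupp.single (x.1, α) x.2) := by
  rintro ⟨θ, k⟩ ⟨θ', k'⟩ ⟨hθ, hk⟩
  obtain ⟨d, rfl⟩ := Nat.exists_eq_add_of_le hk
  have hshift : ∀ j : ℕ,
      ord.toMon (Finsupp.single (θ, α) j) ≤ ord.toMon (Finsupp.single (θ', α) j) := by
    intro j
    induction j with
    | zero => simp only [Finsupp.single_zero, le_rfl]
    | succ j ih =>
      simp only [Finsupp.single_add]
      exact add_le_add (α := ord.Mon) ih (toMon_single_le_of_le α hθ)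
  calc ord.toMon (Finsupp.single (θ, α) k)
      ≤ ord.toMon (Finsupp.single (θ', α) k) := hshift k
    _ ≤ ord.toMon (Finsupp.single (θ', α) k) + ord.toMon (Finsupp.single (θ', α) d) :=
      le_add_of_nonneg_right (zero_le_toMon _)
    _ = ord.toMon (Finsupp.single (θ', α) (k + d)) := by simp only [Finsupp.single_add]; rfl

lemma isPWO_setOf_toMon_single :
    {x : ord.Mon | ∃ v k, x = ord.toMon (Finsupp.single v k)}.IsPWO := by
  have : {x : ord.Mon | ∃ v k, x = ord.toMon (Finsupp.single v k)} =
      ⋃ α ∈ Finset.univ,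
        Set.range fun x : Shift n × ℕ ↦ ord.toMon (Finsupp.single (x.1, α) x.2) := by
    ext x
    simp only [Set.mem_ofPred_eq, Finset.mem_univ, Set.iUnion_true, Set.mem_iUnion, Set.mem_range,
      Prod.exists, eq_comm (a := x)]
    exact ⟨fun ⟨θ, α, k, h⟩ ↦ ⟨α, θ, k, h⟩, fun ⟨α, θ, k, h⟩ ↦ ⟨θ, α, k, h⟩⟩
  rw [this, Finset.isPWO_bUnion]
  intro α _
  rw [← Set.image_univ]
  exact (Set.isPWO_of_wellQuasiOrderedLE _).image_of_monotone (monotone_toMon_single α)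

instance : WellFoundedLT ord.Mon := by
  have hpwo := (isPWO_setOf_toMon_single (ord := ord)).addSubmonoid_closure (by
    rintro _ ⟨v, k, rfl⟩
    exact zero_le_toMon _)
  rw [show AddSubmonoid.closure {x : ord.Mon | ∃ v k, x = ord.toMon (Finsupp.single v k)} = ⊤
    from Finsupp.add_closure_setOfPred_eq_single, AddSubmonoid.coe_top] at hpwo
  exact wellQuasiOrderedLE_iff_wellFoundedLT.1 (Set.isPWO_univ_iff.1 hpwo)

end Admissible

open MvPolynomial

section Polynomial

variable {K : Type} [Field K] (σK : Shift n → (K →+* K))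

lemma sigmaR_eq_map_rename (θ : Shift n) (f : MvPolynomial (DVar n m) K) :
    sigmaR σK θ f = map (σK θ) (rename (shiftV θ) f) := by
  induction f using MvPolynomial.induction_on with
  | C a => simp [sigmaR]
  | add p q hp hq => simp only [map_add, hp, hq]
  | mul_X p v hp =>
    rw [map_mul, hp]
    simp [sigmaR]

lemma coeff_sigmaR_shiftM (θ : Shift n) (f : MvPolynomial (DVar n m) K) (u : DMon n m) :
    (sigmaR σK θ f).coeff (shiftM θ u) = σK θ (f.coeff u) := by
  rw [sigmaR_eq_map_rename, coeff_map, shiftM, coeff_rename_mapDomain _ (shiftV_injective θ)]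

lemma support_sigmaR [DecidableEq (DMon n m)] (θ : Shift n) (f : MvPolynomial (DVar n m) K) :
    (sigmaR σK θ f).support = f.support.image (shiftM θ) := by
  change _ = f.support.image (Finsupp.mapDomain (shiftV θ))
  rw [sigmaR_eq_map_rename, support_map_of_injective _ (σK θ).injective]
  convert support_rename_of_injective (shiftV_injective θ)

lemma coeff_monomial_mul_sigmaR_add_shiftM (t : DMon n m) (θ : Shift n) (c : K)
    (q : MvPolynomial (DVar n m) K) (u : DMon n m) :
    (monomial t c * sigmaR σK θ q).coeff (t + shiftM θ u) = c * σK θ (q.coeff u) := by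
  rw [coeff_monomial_mul, coeff_sigmaR_shiftM]

lemma exists_eq_add_shiftM_of_mem_support {t : DMon n m} {θ : Shift n} {c : K}
    {q : MvPolynomial (DVar n m) K} {u : DMon n m}
    (hu : u ∈ (monomial t c * sigmaR σK θ q).support) :
    ∃ u' ∈ q.support, u = t + shiftM θ u' := by
  classical
  obtain ⟨t', ht', v, hv, rfl⟩ := Finset.mem_add.1 (support_mul _ _ hu)
  obtain ⟨u', hu', rfl⟩ := Finset.mem_image.1 (support_sigmaR σK θ q ▸ hv)
  exact ⟨u', hu', by rw [Finset.mem_singleton.1 (support_monomial_subset ht')]⟩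

end Polynomial

section Reduction

variable {K : Type} [Field K] {ord : Admissible n m}

lemma IsLm.unique {f : MvPolynomial (DVar n m) K} {w₁ w₂ : DMon n m} (h₁ : IsLm ord f w₁)
    (h₂ : IsLm ord f w₂) : w₁ = w₂ := by
  by_contra hne
  exact ord.irrefl _ (ord.trans _ _ _ (h₂.2 w₁ h₁.1 hne) (h₁.2 w₂ h₂.1 (Ne.symm hne)))

lemma IsMonicP.coeff_eq_one {q : MvPolynomial (DVar n m) K} {lq : DMon n m}
    (hq : IsMonicP ord q) (hlq : IsLm ord q lq) : q.coeff lq = 1 := by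
  obtain ⟨w, hw, hw1⟩ := hq
  rwa [hlq.unique hw]

lemma coeff_monomial_mul_sigmaR_eq_zero_of_lt (σK : Shift n → (K →+* K))
    {q : MvPolynomial (DVar n m) K} {lq : DMon n m} (hlq : IsLm ord q lq) (c : K)
    {t u : DMon n m} {θ : Shift n} (hu : ord.lt (t + shiftM θ lq) u) :
    (monomial t c * sigmaR σK θ q).coeff u = 0 := by
  by_contra h
  obtain ⟨u', hu', rfl⟩ := exists_eq_add_shiftM_of_mem_support σK (mem_support_iff.2 h)
  rcases eq_or_ne u' lq with rfl | hne
  · exact ord.irrefl _ hu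
  · exact ord.irrefl _ (ord.trans _ _ _ hu ((ord.compat u' lq t θ).1 (hlq.2 u' hu' hne)))

variable (ord) in
def IsReducibleMon (F : Set (MvPolynomial (DVar n m) K)) (w : DMon n m) : Prop :=
  ∃ q ∈ F, ∃ lq, IsLm ord q lq ∧ MDvd lq w

variable (σK : Shift n → (K →+* K)) {F : Set (MvPolynomial (DVar n m) K)}

lemma exists_redStep_of_isReducibleMon (hF : ∀ q ∈ F, IsMonicP ord q)
    {p : MvPolynomial (DVar n m) K} {w : DMon n m} (hw : w ∈ p.support)
    (hred : IsReducibleMon ord F w) :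
    ∃ r, RedStep σK ord F p r ∧ r.coeff w = 0 ∧
      ∀ u, ord.lt w u → r.coeff u = p.coeff u := by
  obtain ⟨q, hq, lq, hlq, t, θ, rfl⟩ := hred
  refine ⟨_, ⟨q, hq, lq, hlq, t, θ, hw, rfl⟩, ?_, fun u hu ↦ ?_⟩
  · rw [coeff_sub, coeff_monomial_mul_sigmaR_add_shiftM, (hF q hq).coeff_eq_one hlq, map_one,
      mul_one, sub_self]
  · rw [coeff_sub, coeff_monomial_mul_sigmaR_eq_zero_of_lt σK hlq _ hu, sub_zero]

end Reduction

section NormalForm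

variable {K : Type} [Field K] (σK : Shift n → (K →+* K)) {ord : Admissible n m}
  {F : Set (MvPolynomial (DVar n m) K)}

variable (ord) in
open Classical in
noncomputable def maxReducible (F : Set (MvPolynomial (DVar n m) K))
    (p : MvPolynomial (DVar n m) K) : WithBot ord.Mon :=
  {w ∈ p.support | IsReducibleMon ord F w}.sup fun w ↦ (ord.toMon w : WithBot ord.Mon)

lemma exists_redStep_maxReducible_lt (hF : ∀ q ∈ F, IsMonicP ord q)
    {p : MvPolynomial (DVar n m) K} (hp : ¬ InNormalForm ord F p) :
    ∃ r, RedStep σK ord F p r ∧ maxReducible ord F r < maxReducible ord F p := by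
  classical
  have hS : {w ∈ p.support | IsReducibleMon ord F w}.Nonempty := by
    simp only [InNormalForm, not_forall, not_not] at hp
    obtain ⟨w, hw, hred⟩ := hp
    exact ⟨w, Finset.mem_filter.2 ⟨hw, hred⟩⟩
  obtain ⟨w, hwS, hwmax⟩ := Finset.exists_max_image _ ord.toMon hS
  obtain ⟨hw, hred⟩ := Finset.mem_filter.1 hwS
  have hmax : maxReducible ord F p = ord.toMon w :=
    le_antisymm (Finset.sup_le fun u hu ↦ WithBot.coe_le_coe.2 (hwmax u hu)) (Finset.le_sup hwS)
  obtain ⟨r, hstep, hrw, hrabove⟩ := exists_redStep_of_isReducibleMon σK hF hw hred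
  refine ⟨r, hstep, hmax ▸ (Finset.sup_lt_iff (WithBot.bot_lt_coe _)).2 fun u hu ↦ ?_⟩
  obtain ⟨hur, hured⟩ := Finset.mem_filter.1 hu
  refine WithBot.coe_lt_coe.2 (lt_of_not_ge fun hwu ↦ ?_)
  rcases hwu.eq_or_lt with h | h
  · exact mem_support_iff.1 hur ((show w = u from h) ▸ hrw)
  · have hup : u ∈ p.support := by
      rw [mem_support_iff, ← hrabove u h]
      exact mem_support_iff.1 hur
    exact (hwmax u (Finset.mem_filter.2 ⟨hup, hured⟩)).not_gt h

theorem exists_isNormalFormOf (hF : ∀ q ∈ F, IsMonicP ord q) (p : MvPolynomial (DVar n m) K) :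
    ∃ r, IsNormalFormOf σK ord F p r := by
  induction hM : maxReducible ord F p using WellFoundedLT.induction generalizing p with
  | _ M ih =>
  by_cases hnf : InNormalForm ord F p
  · exact ⟨p, .refl, hnf⟩
  obtain ⟨r, hstep, hlt⟩ := exists_redStep_maxReducible_lt σK hF hnf
  obtain ⟨r', hr', hnf'⟩ := ih _ (hM ▸ hlt) r rfl
  exact ⟨r', .head hstep hr', hnf'⟩

end NormalForm

section Ideal

variable {K : Type} [Field K] {σK : Shift n → (K →+* K)} {ord : Admissible n m}
  {G : Set (MvPolynomial (DVar n m) K)} {p r : MvPolynomial (DVar n m) K}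

lemma sub_mem_diffIdealS_of_redStep (h : RedStep σK ord G p r) : p - r ∈ diffIdealS σK G := by
  obtain ⟨q, hq, -, -, t, θ, -, rfl⟩ := h
  rw [sub_sub_cancel]
  exact Ideal.mul_mem_left _ _ (Ideal.subset_span ⟨θ, q, hq, rfl⟩)

lemma sub_mem_diffIdealS_of_reflTransGen (h : Relation.ReflTransGen (RedStep σK ord G) p r) :
    p - r ∈ diffIdealS σK G := by
  induction h with
  | refl => simp
  | tail _ hstep ih => simpa using add_mem ih (sub_mem_diffIdealS_of_redStep hstep)

lemma IsStandardBasis.mem_iff_of_isNormalFormOf {I : Ideal (MvPolynomial (DVar n m) K)}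
    (hSB : IsStandardBasis σK ord G I) (hr : IsNormalFormOf σK ord G p r) :
    p ∈ I ↔ r = 0 := by
  have hpr : p - r ∈ I := hSB.1 ▸ sub_mem_diffIdealS_of_reflTransGen hr.1
  refine ⟨fun hp ↦ ?_, fun hr0 ↦ by simpa [hr0] using hpr⟩
  by_contra hr0
  obtain ⟨g, hg, lg, lr, hlg, hlr, hdvd⟩ := hSB.2 r (by simpa using sub_mem hp hpr) hr0
  exact hr.2 lr hlr.1 ⟨g, hg, lg, hlg, hdvd⟩

end Ideal

end

theorem membership_via_normal_forms_general (n m : ℕ)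
    (K : Type) [Field K] (σK : Shift n → (K →+* K))
    (ord : Admissible n m)
    (I : Ideal (MvPolynomial (DVar n m) K))
    (G : Set (MvPolynomial (DVar n m) K))
    (hG : ∀ g ∈ G, g ≠ 0 ∧ IsMonicP ord g)
    (hSB : IsStandardBasis σK ord G I) :
    ∀ f : MvPolynomial (DVar n m) K,
      (f ∈ I ↔ IsNormalFormOf σK ord G f 0) ∧
      (f ∈ I ↔ ∀ r, IsNormalFormOf σK ord G f r → r = 0) := by
  intro f
  obtain ⟨r, hr⟩ := exists_isNormalFormOf σK (fun g hg ↦ (hG g hg).2) f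
  refine ⟨⟨fun hf ↦ ?_, fun h0 ↦ (hSB.mem_iff_of_isNormalFormOf h0).2 rfl⟩,
    ⟨fun hf r' hr' ↦ (hSB.mem_iff_of_isNormalFormOf hr').1 hf,
      fun h ↦ (hSB.mem_iff_of_isNormalFormOf hr).2 (h r hr)⟩⟩
  rwa [← (hSB.mem_iff_of_isNormalFormOf hr).1 hf]

/-- Ideal membership via normal forms: if `G` is a standard basis of the difference
ideal `I` w.r.t. an admissible ordering, then `f ∈ I` iff `0` is a normal form of `f`
modulo `G`; equivalently, `f ∈ I` exactly when every normal form of `f` modulo `G`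
equals `0`. -/
theorem membership_via_normal_forms (n m : ℕ) (hn : 1 ≤ n) (hm : 1 ≤ m)
    (K : Type) [Field K] (σK : Shift n → (K →+* K))
    (hσ0 : σK 0 = RingHom.id K)
    (hσadd : ∀ a b : Shift n, σK (a + b) = (σK a).comp (σK b))
    (ord : Admissible n m)
    (I : Ideal (MvPolynomial (DVar n m) K)) (hI : IsDiffIdeal σK I)
    (G : Set (MvPolynomial (DVar n m) K))
    (hGI : G ⊆ (I : Set (MvPolynomial (DVar n m) K)))
    (hG : ∀ g ∈ G, g ≠ 0 ∧ IsMonicP ord g)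
    (hSB : IsStandardBasis σK ord G I) :
    ∀ f : MvPolynomial (DVar n m) K,
      (f ∈ I ↔ IsNormalFormOf σK ord G f 0) ∧
      (f ∈ I ↔ ∀ r, IsNormalFormOf σK ord G f r → r = 0) :=
  membership_via_normal_forms_general n m K σK ord I G hG hSB
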